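/- arXiv:1111.2636 — 2 statements merged into one kernel-verified Lean document; each statement's English description precedes it below -/
import Mathlib

section
/- For an irreducible finite-dimensional representation τ of an orthogonal group with a non-degenerate invariant symmetric bilinear form B, and a nonzero linear functional φ on τ: (φ⊗φ) applied to the invariant element Σᵢ eᵢ⊗eᵢ (where {eᵢ} is B-orthonormal) equals B*(φ♯, φ♯) where φ♯ is the vector representing φ via B; consequently (φ⊗φ) is nonzero on the invariant element iff B(φ♯, φ♯) ≠ 0, which holds whenever φ is χ-equivariant for a subgroup C with dim Hom_C(τ, χ) = 1 and τ self-dual via B with τ* ≅ τ sending the χ⁻¹-equivariant line to the χ-equivariant line. -/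
open TensorProduct

namespace LinearMap

variable {R M ι : Type*} [CommSemiring R] [AddCommMonoid M] [Module R M]
  [Fintype ι] [DecidableEq ι] {B : M →ₗ[R] M →ₗ[R] R} {e : Module.Basis ι R M}

theorem apply_basis_eq_repr_of_orthonormal
    (horth : ∀ i j, B (e i) (e j) = if i = j then 1 else 0) (x : M) (j : ι) :
    B x (e j) = e.repr x j := by
  conv_lhs => rw [← e.sum_repr x]
  simp only [map_sum, map_smul, LinearMap.sum_apply, LinearMap.smul_apply, horth, smul_eq_mul,
    mul_ite, mul_one, mul_zero, Finset.sum_ite_eq', Finset.mem_univ, if_true]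

theorem apply_eq_sum_apply_basis_mul_of_orthonormal
    (horth : ∀ i j, B (e i) (e j) = if i = j then 1 else 0) (x y : M) :
    B x y = ∑ i, B x (e i) * B y (e i) := by
  conv_lhs => rw [← e.sum_repr y]
  simp only [map_sum, map_smul, smul_eq_mul, apply_basis_eq_repr_of_orthonormal horth]
  exact Finset.sum_congr rfl fun i _ => mul_comm _ _

end LinearMap

theorem stmt12_general {τ : Type*} [AddCommGroup τ] [Module ℂ τ]
    (B : τ →ₗ[ℂ] τ →ₗ[ℂ] ℂ)
    (φ : τ →ₗ[ℂ] ℂ)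
    (s : τ) (hs : ∀ v : τ, φ v = B s v)
    {ι : Type*} [Fintype ι] [DecidableEq ι] (e : Module.Basis ι ℂ τ)
    (horth : ∀ i j : ι, B (e i) (e j) = if i = j then 1 else 0) :
    TensorProduct.lift ((LinearMap.mul ℂ ℂ).compl₁₂ φ φ) (∑ i : ι, e i ⊗ₜ[ℂ] e i)
        = B s s ∧
      (TensorProduct.lift ((LinearMap.mul ℂ ℂ).compl₁₂ φ φ) (∑ i : ι, e i ⊗ₜ[ℂ] e i) ≠ 0
        ↔ B s s ≠ 0) := by
  have hmain : TensorProduct.lift ((LinearMap.mul ℂ ℂ).compl₁₂ φ φ)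
      (∑ i : ι, e i ⊗ₜ[ℂ] e i) = B s s := by
    simp [LinearMap.apply_eq_sum_apply_basis_mul_of_orthonormal horth s s, hs]
  exact ⟨hmain, by rw [hmain]⟩

/-- For a non-degenerate symmetric bilinear form B on τ, a functional φ
represented via B by φ♯ (φ(v) = B(φ♯,v)), and a B-orthonormal basis {eᵢ} with
T = Σ eᵢ ⊗ eᵢ: (φ⊗φ)(T) = B(φ♯,φ♯); consequently (φ⊗φ)(T) ≠ 0 ↔ B(φ♯,φ♯) ≠ 0. -/
theorem stmt12 {τ : Type*} [AddCommGroup τ] [Module ℂ τ] [FiniteDimensional ℂ τ]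
    (B : τ →ₗ[ℂ] τ →ₗ[ℂ] ℂ)
    (hsymm : ∀ x y : τ, B x y = B y x)
    (hnondeg : ∀ x : τ, (∀ y : τ, B x y = 0) → x = 0)
    (φ : τ →ₗ[ℂ] ℂ) (hφ : φ ≠ 0)
    (s : τ) (hs : ∀ v : τ, φ v = B s v)
    {ι : Type*} [Fintype ι] [DecidableEq ι] (e : Module.Basis ι ℂ τ)
    (horth : ∀ i j : ι, B (e i) (e j) = if i = j then 1 else 0) :
    TensorProduct.lift ((LinearMap.mul ℂ ℂ).compl₁₂ φ φ) (∑ i : ι, e i ⊗ₜ[ℂ] e i)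
        = B s s ∧
      (TensorProduct.lift ((LinearMap.mul ℂ ℂ).compl₁₂ φ φ) (∑ i : ι, e i ⊗ₜ[ℂ] e i) ≠ 0
        ↔ B s s ≠ 0) :=
  stmt12_general B φ s hs e horth
end

section
/- Let g be a vector space, σ : g → g a linear involution, h = ker(σ − id), and n, l, n̄ subspaces with g = n ⊕ l ⊕ n̄, σ(l) = l, σ(n) = n̄. Then g = h + (l ⊕ n̄), and h ∩ (l ⊕ n̄) = h ∩ l. -/
/-! Write `h` for the fixed space of `σ`. For `x ∈ n`, the vector `x + σ x` lies in `h` and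
`σ x ∈ n̄`, so `n ⊆ h + n̄`, whence `h + (l ⊕ n̄) = g`. If `y + m` (`y ∈ l`, `m ∈ n̄`) is fixed by
`σ`, then `σ m = (y - σ y) + m` lies both in `σ(n̄) = n` and in `l ⊕ n̄`, so `σ m = 0` and `m = 0`. -/

namespace LinearMap

variable {R M : Type*} [Ring R] [AddCommGroup M] [Module R M] {σ : M →ₗ[R] M}

theorem mem_ker_sub_id_iff {x : M} : x ∈ ker (σ - id) ↔ σ x = x := by
  simp only [mem_ker, sub_apply, id_apply, sub_eq_zero]

theorem le_ker_sub_id_sup {N Nb : Submodule R M} (hσ : Function.Involutive σ)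
    (hN : N.map σ ≤ Nb) : N ≤ ker (σ - id) ⊔ Nb := by
  intro n hn
  have hσn : σ n ∈ Nb := hN (Submodule.mem_map_of_mem hn)
  have hfix : n + σ n ∈ ker (σ - id) := by
    rw [mem_ker_sub_id_iff, map_add, hσ n, add_comm]
  simpa using Submodule.add_mem_sup hfix (Submodule.neg_mem _ hσn)

theorem ker_sub_id_inf_sup_le {N L Nb : Submodule R M} (hσ : Function.Injective σ)
    (hL : L.map σ ≤ L) (hNb : Nb.map σ ≤ N) (hdisj : Disjoint N (L ⊔ Nb)) :
    ker (σ - id) ⊓ (L ⊔ Nb) ≤ L := by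
  rintro x ⟨hfix : x ∈ ker (σ - id), hx : x ∈ L ⊔ Nb⟩
  obtain ⟨l, hl, m, hm, rfl⟩ := Submodule.mem_sup.mp hx
  have hσm : σ m = (l - σ l) + m := by
    rw [mem_ker_sub_id_iff, map_add] at hfix
    rw [eq_sub_of_add_eq' hfix]; abel
  have hσm_mem : σ m ∈ L ⊔ Nb := hσm ▸
    Submodule.add_mem_sup (L.sub_mem hl (hL (Submodule.mem_map_of_mem hl))) hm
  have hσm_zero : σ m = 0 :=
    Submodule.disjoint_def.mp hdisj _ (hNb (Submodule.mem_map_of_mem hm)) hσm_mem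
  rw [(map_eq_zero_iff σ hσ).mp hσm_zero, add_zero]
  exact hl

end LinearMap

theorem stmt17_general {g : Type*} [AddCommGroup g] [Module ℂ g]
    (N L Nb : Submodule ℂ g)
    (hsum : N ⊔ L ⊔ Nb = ⊤)
    (hdisj1 : Disjoint N (L ⊔ Nb))
    (σ : g →ₗ[ℂ] g) (hσ : σ ∘ₗ σ = LinearMap.id)
    (hL : L.map σ = L) (hN : N.map σ = Nb) :
    LinearMap.ker (σ - LinearMap.id) ⊔ (L ⊔ Nb) = ⊤ ∧
      LinearMap.ker (σ - LinearMap.id) ⊓ (L ⊔ Nb)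
        = LinearMap.ker (σ - LinearMap.id) ⊓ L := by
  have hinv : Function.Involutive σ := fun x => congr($hσ x)
  have hNb : Nb.map σ = N := by
    rw [← hN, ← Submodule.map_comp, hσ, Submodule.map_id]
  constructor
  · refine top_le_iff.mp ?_
    calc ⊤ = N ⊔ L ⊔ Nb := hsum.symm
      _ ≤ LinearMap.ker (σ - LinearMap.id) ⊔ Nb ⊔ L ⊔ Nb := by
        gcongr; exact LinearMap.le_ker_sub_id_sup hinv hN.le
      _ = LinearMap.ker (σ - LinearMap.id) ⊔ (L ⊔ Nb) := by
        rw [sup_right_comm _ Nb L, sup_assoc, sup_assoc, sup_idem]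
  · exact le_antisymm
      (le_inf inf_le_left (LinearMap.ker_sub_id_inf_sup_le hinv.injective hL.le hNb.le hdisj1))
      (inf_le_inf_left _ le_sup_left)

/-- For g = n ⊕ l ⊕ n̄ and a linear involution σ with σ(l) = l,
σ(n) = n̄, let h = ker(σ − id). Then h + (l ⊕ n̄) = g and h ∩ (l ⊕ n̄) = h ∩ l. -/
theorem stmt17 {g : Type*} [AddCommGroup g] [Module ℂ g]
    (N L Nb : Submodule ℂ g)
    (hsum : N ⊔ L ⊔ Nb = ⊤)
    (hdisj1 : Disjoint N (L ⊔ Nb)) (hdisj2 : Disjoint L Nb)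
    (σ : g →ₗ[ℂ] g) (hσ : σ ∘ₗ σ = LinearMap.id)
    (hL : L.map σ = L) (hN : N.map σ = Nb) :
    LinearMap.ker (σ - LinearMap.id) ⊔ (L ⊔ Nb) = ⊤ ∧
      LinearMap.ker (σ - LinearMap.id) ⊓ (L ⊔ Nb)
        = LinearMap.ker (σ - LinearMap.id) ⊓ L :=
  stmt17_general N L Nb hsum hdisj1 σ hσ hL hN
end
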